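/- For any data-graph G and positive-fragment node expression ν of regular XPath, one can reduce global satisfaction to origin satisfaction: let G' be obtained from G by fixing an enumeration p_1,…,p_n of V_G, adding a fresh node p_0 (arbitrary data value) with a self-loop on a fresh edge label 'loop', and adding fresh-label 'ε'-edges (p_i, ε, p_{i+1}) for 0 ≤ i ≤ n where p_{n+1} = p_0. Then G satisfies ν at every node if and only if G', p_0 satisfies the node expression ⟨(ε·[f(ν)])^* · ε · loop⟩, where f(ν) replaces every wildcard subformula '_' in ν by the finite union ⋃_{a ∈ Σ_e} a. -/

import Mathlib

structure DataGraph (σe σn : Type) where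
  V : Set ℕ
  E : Set (ℕ × σe × ℕ)
  D : ℕ → σn

/- Syntax of positive regular XPath with a wildcard path expression `any` (written `_` in the
paper), matching any edge regardless of its label. -/
mutual
inductive PathExpr (σe σn : Type) where
  | eps : PathExpr σe σn
  | any : PathExpr σe σn
  | label : σe → PathExpr σe σn
  | inv : σe → PathExpr σe σn
  | test : NodeExpr σe σn → PathExpr σe σn
  | concat : PathExpr σe σn → PathExpr σe σn → PathExpr σe σn
  | union : PathExpr σe σn → PathExpr σe σn → PathExpr σe σn
  | inter : PathExpr σe σn → PathExpr σe σn → PathExpr σe σn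
  | star : PathExpr σe σn → PathExpr σe σn

inductive NodeExpr (σe σn : Type) where
  | eq : σn → NodeExpr σe σn
  | ne : σn → NodeExpr σe σn
  | and : NodeExpr σe σn → NodeExpr σe σn → NodeExpr σe σn
  | or : NodeExpr σe σn → NodeExpr σe σn → NodeExpr σe σn
  | ex : PathExpr σe σn → NodeExpr σe σn
  | exEq : PathExpr σe σn → PathExpr σe σn → NodeExpr σe σn
  | exNe : PathExpr σe σn → PathExpr σe σn → NodeExpr σe σn
end

/- Semantics. -/
mutual
def pathSem {σe σn : Type} (G : DataGraph σe σn) : PathExpr σe σn → ℕ → ℕ → Prop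
  | .eps, v, w => v = w ∧ v ∈ G.V
  | .any, v, w => ∃ a, (v, a, w) ∈ G.E
  | .label a, v, w => (v, a, w) ∈ G.E
  | .inv a, v, w => (w, a, v) ∈ G.E
  | .test ν, v, w => v = w ∧ nodeSem G ν v
  | .concat α β, v, w => ∃ u, pathSem G α v u ∧ pathSem G β u w
  | .union α β, v, w => pathSem G α v w ∨ pathSem G β v w
  | .inter α β, v, w => pathSem G α v w ∧ pathSem G β v w
  | .star α, v, w => v ∈ G.V ∧ w ∈ G.V ∧
      Relation.ReflTransGen (fun x y => pathSem G α x y) v w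

def nodeSem {σe σn : Type} (G : DataGraph σe σn) : NodeExpr σe σn → ℕ → Prop
  | .eq c, v => v ∈ G.V ∧ G.D v = c
  | .ne c, v => v ∈ G.V ∧ G.D v ≠ c
  | .and ν ν', v => nodeSem G ν v ∧ nodeSem G ν' v
  | .or ν ν', v => nodeSem G ν v ∨ nodeSem G ν' v
  | .ex α, v => ∃ w, pathSem G α v w
  | .exEq α β, v => ∃ w u, pathSem G α v w ∧ pathSem G β v u ∧ G.D w = G.D u
  | .exNe α β, v => ∃ w u, pathSem G α v w ∧ pathSem G β v u ∧ G.D w ≠ G.D u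
end

/-- The union path expression `a ∪ b ∪ … ` over a nonempty list of edge labels. -/
def unionOf {σe σn : Type} : σe → List σe → PathExpr σe σn
  | a, [] => .label a
  | a, b :: l => .union (.label a) (unionOf b l)

/- `elimAny` replaces every wildcard subformula by the explicit finite union over the edge
alphabet (given by the nonempty enumeration `a :: l`). -/
mutual
def elimAnyP {σe σn : Type} (a : σe) (l : List σe) : PathExpr σe σn → PathExpr σe σn
  | .eps => .eps
  | .any => unionOf a l
  | .label b => .label b
  | .inv b => .inv b
  | .test ν => .test (elimAnyN a l ν)
  | .concat α β => .concat (elimAnyP a l α) (elimAnyP a l β)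
  | .union α β => .union (elimAnyP a l α) (elimAnyP a l β)
  | .inter α β => .inter (elimAnyP a l α) (elimAnyP a l β)
  | .star α => .star (elimAnyP a l α)

def elimAnyN {σe σn : Type} (a : σe) (l : List σe) : NodeExpr σe σn → NodeExpr σe σn
  | .eq c => .eq c
  | .ne c => .ne c
  | .and ν ν' => .and (elimAnyN a l ν) (elimAnyN a l ν')
  | .or ν ν' => .or (elimAnyN a l ν) (elimAnyN a l ν')
  | .ex α => .ex (elimAnyP a l α)
  | .exEq α β => .exEq (elimAnyP a l α) (elimAnyP a l β)
  | .exNe α β => .exNe (elimAnyP a l α) (elimAnyP a l β)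
end

/- Relabelling an expression along a map of edge alphabets. -/
mutual
def mapP {σe τ σn : Type} (g : σe → τ) : PathExpr σe σn → PathExpr τ σn
  | .eps => .eps
  | .any => .any
  | .label b => .label (g b)
  | .inv b => .inv (g b)
  | .test ν => .test (mapN g ν)
  | .concat α β => .concat (mapP g α) (mapP g β)
  | .union α β => .union (mapP g α) (mapP g β)
  | .inter α β => .inter (mapP g α) (mapP g β)
  | .star α => .star (mapP g α)

def mapN {σe τ σn : Type} (g : σe → τ) : NodeExpr σe σn → NodeExpr τ σn
  | .eq c => .eq c
  | .ne c => .ne c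
  | .and ν ν' => .and (mapN g ν) (mapN g ν')
  | .or ν ν' => .or (mapN g ν) (mapN g ν')
  | .ex α => .ex (mapP g α)
  | .exEq α β => .exEq (mapP g α) (mapP g β)
  | .exNe α β => .exNe (mapP g α) (mapP g β)
end

/-! Wildcards are the only part of `ν` that can see the fresh `ε`- and `loop`-edges of `G'`.
Replacing them by the union over the original alphabet does not change the meaning in `G`, and
a wildcard-free expression means the same in `G'` as in `G` at every node of `G`, since `G'` only
adds nodes and edges with fresh labels. At `p₀` the loop can only be entered from `p₀`, whose
unique `ε`-predecessor is `p_n`; the `ε`-path from `p₀` to `p_n` passes through every node of `G`,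
so `⟨(ε[f(ν)])* ε loop⟩` holds at `p₀` iff `f(ν)` holds at all of them. -/

theorem Relation.ReflTransGen.mem_of_closed {α : Type*} {r : α → α → Prop} {S : Set α}
    (hS : ∀ x y, r x y → x ∈ S → y ∈ S) {a b : α} (h : Relation.ReflTransGen r a b)
    (ha : a ∈ S) : b ∈ S := by
  induction h with
  | refl => exact ha
  | tail _ hbc ih => exact hS _ _ hbc ih

theorem Relation.reflTransGen_congr_of_closed {α : Type*} {r r' : α → α → Prop} {S : Set α}
    (hS : ∀ x y, r x y → x ∈ S → y ∈ S) (hr : ∀ x ∈ S, ∀ y, r' x y ↔ r x y) {a b : α}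
    (ha : a ∈ S) : Relation.ReflTransGen r' a b ↔ Relation.ReflTransGen r a b := by
  constructor
  · intro h
    induction h with
    | refl => rfl
    | tail _ hcd ih => exact ih.tail ((hr _ (ih.mem_of_closed hS ha) _).1 hcd)
  · intro h
    induction h with
    | refl => rfl
    | tail hac hcd ih => exact ih.tail ((hr _ (hac.mem_of_closed hS ha) _).2 hcd)

theorem reflTransGen_cycle_iff {n : ℕ} {P : ℕ → Prop} {r : ℕ → ℕ → Prop}
    (hr : ∀ x y, r x y ↔
      ((x = n ∧ y = 0) ∨ (x = n - 1 ∧ y = n) ∨ (x + 1 < n ∧ y = x + 1)) ∧ P y) {j : ℕ} :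
    Relation.ReflTransGen r n j ↔ j = n ∨ (j < n ∧ ∀ k ≤ j, P k) := by
  constructor
  · intro h
    induction h with
    | refl => exact .inl rfl
    | tail _ hbc ih =>
      obtain ⟨hstep, hc⟩ := (hr _ _).1 hbc
      refine or_iff_not_imp_left.2 fun hcn => ⟨by omega, fun k hk => ?_⟩
      rcases hk.lt_or_eq with hk | rfl
      · exact (ih.resolve_left (by omega)).2 k (by omega)
      · exact hc
  · rintro (rfl | ⟨hj, hP⟩)
    · rfl
    induction j with
    | zero => exact .single ((hr _ _).2 ⟨.inl ⟨rfl, rfl⟩, hP 0 le_rfl⟩)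
    | succ j ih =>
      exact (ih (by omega) fun k hk => hP k (by omega)).tail ((hr _ _).2 ⟨by omega, hP _ le_rfl⟩)

section

variable {σe τ σn : Type}

mutual
theorem pathSem_mem {G : DataGraph σe σn} (hwf : ∀ e ∈ G.E, e.1 ∈ G.V ∧ e.2.2 ∈ G.V) :
    ∀ {α : PathExpr σe σn} {v w : ℕ}, pathSem G α v w → v ∈ G.V ∧ w ∈ G.V
  | .eps, _, _, ⟨rfl, hv⟩ => ⟨hv, hv⟩
  | .any, _, _, ⟨_, h⟩ => hwf _ h
  | .label _, _, _, h => hwf _ h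
  | .inv _, _, _, h => (hwf _ h).symm
  | .test _, _, _, ⟨rfl, h⟩ => ⟨nodeSem_mem hwf h, nodeSem_mem hwf h⟩
  | .concat _ _, _, _, ⟨_, h₁, h₂⟩ => ⟨(pathSem_mem hwf h₁).1, (pathSem_mem hwf h₂).2⟩
  | .union _ _, _, _, .inl h => pathSem_mem hwf h
  | .union _ _, _, _, .inr h => pathSem_mem hwf h
  | .inter _ _, _, _, ⟨h, _⟩ => pathSem_mem hwf h
  | .star _, _, _, ⟨hv, hw, _⟩ => ⟨hv, hw⟩

theorem nodeSem_mem {G : DataGraph σe σn} (hwf : ∀ e ∈ G.E, e.1 ∈ G.V ∧ e.2.2 ∈ G.V) :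
    ∀ {ν : NodeExpr σe σn} {v : ℕ}, nodeSem G ν v → v ∈ G.V
  | .eq _, _, ⟨hv, _⟩ => hv
  | .ne _, _, ⟨hv, _⟩ => hv
  | .and _ _, _, ⟨h, _⟩ => nodeSem_mem hwf h
  | .or _ _, _, .inl h => nodeSem_mem hwf h
  | .or _ _, _, .inr h => nodeSem_mem hwf h
  | .ex _, _, ⟨_, h⟩ => (pathSem_mem hwf h).1
  | .exEq _ _, _, ⟨_, _, h, _⟩ => (pathSem_mem hwf h).1
  | .exNe _ _, _, ⟨_, _, h, _⟩ => (pathSem_mem hwf h).1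
end

theorem pathSem_concat_label_test (G : DataGraph σe σn) (b : σe) (μ : NodeExpr σe σn)
    (x y : ℕ) : pathSem G (.concat (.label b) (.test μ)) x y ↔ (x, b, y) ∈ G.E ∧ nodeSem G μ y :=
  ⟨fun ⟨_, h, rfl, hμ⟩ => ⟨h, hμ⟩, fun ⟨h, hμ⟩ => ⟨y, h, rfl, hμ⟩⟩

theorem nodeSem_ex_star_return_iff {G : DataGraph σe σn} {S : PathExpr σe σn} {ε loop : σe}
    {p q : ℕ} (hp : p ∈ G.V) (hq : q ∈ G.V) (hloop : ∀ x y, (x, loop, y) ∈ G.E ↔ x = p ∧ y = p)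
    (hε : ∀ x, (x, ε, p) ∈ G.E ↔ x = q) :
    nodeSem G (.ex (.concat (.star S) (.concat (.label ε) (.label loop)))) p ↔
      Relation.ReflTransGen (pathSem G S) p q := by
  constructor
  · rintro ⟨w, u, ⟨-, -, hpath⟩, u', hεu, hloopu'⟩
    rw [((hloop _ _).1 hloopu').1] at hεu
    exact (hε u).1 hεu ▸ hpath
  · exact fun hpath => ⟨p, q, ⟨hp, hq, hpath⟩, p, (hε q).2 rfl, (hloop p p).2 ⟨rfl, rfl⟩⟩

theorem pathSem_unionOf (G : DataGraph σe σn) (a : σe) (l : List σe) (v w : ℕ) :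
    pathSem G (unionOf a l) v w ↔ ∃ b ∈ a :: l, (v, b, w) ∈ G.E := by
  induction l generalizing a with
  | nil => simp [unionOf, pathSem]
  | cons b l ih => simp [unionOf, pathSem, ih]

mutual
theorem pathSem_elimAnyP {G : DataGraph σe σn} {a : σe} {l : List σe}
    (hcov : ∀ x : σe, x ∈ a :: l) :
    ∀ α : PathExpr σe σn, pathSem G (elimAnyP a l α) = pathSem G α
  | .eps | .label _ | .inv _ => rfl
  | .any => by
      funext v w
      simp only [elimAnyP, pathSem_unionOf, pathSem]
      exact propext ⟨fun ⟨b, _, h⟩ => ⟨b, h⟩, fun ⟨b, h⟩ => ⟨b, hcov b, h⟩⟩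
  | .test ν => by funext v w; simp only [elimAnyP, pathSem, nodeSem_elimAnyN hcov ν]
  | .concat α β | .union α β | .inter α β => by
      funext v w
      simp only [elimAnyP, pathSem, pathSem_elimAnyP hcov α, pathSem_elimAnyP hcov β]
  | .star α => by funext v w; simp only [elimAnyP, pathSem, pathSem_elimAnyP hcov α]

theorem nodeSem_elimAnyN {G : DataGraph σe σn} {a : σe} {l : List σe}
    (hcov : ∀ x : σe, x ∈ a :: l) :
    ∀ ν : NodeExpr σe σn, nodeSem G (elimAnyN a l ν) = nodeSem G ν
  | .eq _ | .ne _ => rfl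
  | .and ν ν' | .or ν ν' => by
      funext v
      simp only [elimAnyN, nodeSem, nodeSem_elimAnyN hcov ν, nodeSem_elimAnyN hcov ν']
  | .ex α => by funext v; simp only [elimAnyN, nodeSem, pathSem_elimAnyP hcov α]
  | .exEq α β | .exNe α β => by
      funext v
      simp only [elimAnyN, nodeSem, pathSem_elimAnyP hcov α, pathSem_elimAnyP hcov β]
end

mutual
def PathExpr.WildcardFree : PathExpr σe σn → Prop
  | .eps | .label _ | .inv _ => True
  | .any => False
  | .test ν => ν.WildcardFree
  | .concat α β | .union α β | .inter α β => α.WildcardFree ∧ β.WildcardFree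
  | .star α => α.WildcardFree

def NodeExpr.WildcardFree : NodeExpr σe σn → Prop
  | .eq _ | .ne _ => True
  | .and ν ν' | .or ν ν' => ν.WildcardFree ∧ ν'.WildcardFree
  | .ex α => α.WildcardFree
  | .exEq α β | .exNe α β => α.WildcardFree ∧ β.WildcardFree
end

theorem unionOf_wildcardFree (a : σe) (l : List σe) :
    (unionOf a l : PathExpr σe σn).WildcardFree := by
  induction l generalizing a with
  | nil => trivial
  | cons b l ih => exact ⟨trivial, ih b⟩

mutual
theorem elimAnyP_wildcardFree (a : σe) (l : List σe) :
    ∀ α : PathExpr σe σn, (elimAnyP a l α).WildcardFree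
  | .eps | .label _ | .inv _ => trivial
  | .any => unionOf_wildcardFree a l
  | .test ν => elimAnyN_wildcardFree a l ν
  | .concat α β | .union α β | .inter α β =>
      ⟨elimAnyP_wildcardFree a l α, elimAnyP_wildcardFree a l β⟩
  | .star α => elimAnyP_wildcardFree a l α

theorem elimAnyN_wildcardFree (a : σe) (l : List σe) :
    ∀ ν : NodeExpr σe σn, (elimAnyN a l ν).WildcardFree
  | .eq _ | .ne _ => trivial
  | .and ν ν' | .or ν ν' => ⟨elimAnyN_wildcardFree a l ν, elimAnyN_wildcardFree a l ν'⟩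
  | .ex α => elimAnyP_wildcardFree a l α
  | .exEq α β | .exNe α β => ⟨elimAnyP_wildcardFree a l α, elimAnyP_wildcardFree a l β⟩
end

structure DataGraph.IsExtension (g : σe → τ) (G : DataGraph σe σn) (G' : DataGraph τ σn) :
    Prop where
  V_subset : G.V ⊆ G'.V
  D_eq : G'.D = G.D
  mem_E_iff : ∀ x b y, (x, g b, y) ∈ G'.E ↔ (x, b, y) ∈ G.E

mutual
theorem pathSem_mapP_iff {g : σe → τ} {G : DataGraph σe σn} {G' : DataGraph τ σn}
    (hG : G.IsExtension g G') (hwf : ∀ e ∈ G.E, e.1 ∈ G.V ∧ e.2.2 ∈ G.V) :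
    ∀ {α : PathExpr σe σn}, α.WildcardFree → ∀ {v w : ℕ}, v ∈ G.V →
      (pathSem G' (mapP g α) v w ↔ pathSem G α v w)
  | .eps, _, _, _, hv => by simp only [mapP, pathSem, hv, hG.V_subset hv]
  | .any, hα, _, _, _ => hα.elim
  | .label _, _, _, _, _ | .inv _, _, _, _, _ => hG.mem_E_iff _ _ _
  | .test _, hα, _, _, hv => and_congr_right fun _ => nodeSem_mapN_iff hG hwf hα hv
  | .concat _ _, hα, _, _, hv => by
      constructor
      · rintro ⟨u, h₁, h₂⟩
        have h₁ := (pathSem_mapP_iff hG hwf hα.1 hv).1 h₁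
        exact ⟨u, h₁, (pathSem_mapP_iff hG hwf hα.2 (pathSem_mem hwf h₁).2).1 h₂⟩
      · rintro ⟨u, h₁, h₂⟩
        exact ⟨u, (pathSem_mapP_iff hG hwf hα.1 hv).2 h₁,
          (pathSem_mapP_iff hG hwf hα.2 (pathSem_mem hwf h₁).2).2 h₂⟩
  | .union _ _, hα, _, _, hv =>
      or_congr (pathSem_mapP_iff hG hwf hα.1 hv) (pathSem_mapP_iff hG hwf hα.2 hv)
  | .inter _ _, hα, _, _, hv =>
      and_congr (pathSem_mapP_iff hG hwf hα.1 hv) (pathSem_mapP_iff hG hwf hα.2 hv)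
  | .star α, hα, _, w, hv => by
      have hclosed : ∀ x y, pathSem G α x y → x ∈ G.V → y ∈ G.V :=
        fun _ _ h _ => (pathSem_mem hwf h).2
      have hsteps := Relation.reflTransGen_congr_of_closed hclosed
        (fun _ hx _ => pathSem_mapP_iff (α := α) hG hwf hα hx) (b := w) hv
      constructor
      · rintro ⟨-, -, h⟩
        exact ⟨hv, (hsteps.1 h).mem_of_closed hclosed hv, hsteps.1 h⟩
      · rintro ⟨-, hw, h⟩
        exact ⟨hG.V_subset hv, hG.V_subset hw, hsteps.2 h⟩

theorem nodeSem_mapN_iff {g : σe → τ} {G : DataGraph σe σn} {G' : DataGraph τ σn}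
    (hG : G.IsExtension g G') (hwf : ∀ e ∈ G.E, e.1 ∈ G.V ∧ e.2.2 ∈ G.V) :
    ∀ {ν : NodeExpr σe σn}, ν.WildcardFree → ∀ {v : ℕ}, v ∈ G.V →
      (nodeSem G' (mapN g ν) v ↔ nodeSem G ν v)
  | .eq _, _, _, hv | .ne _, _, _, hv => by
      simp only [mapN, nodeSem, hG.D_eq, hv, hG.V_subset hv]
  | .and _ _, hν, _, hv =>
      and_congr (nodeSem_mapN_iff hG hwf hν.1 hv) (nodeSem_mapN_iff hG hwf hν.2 hv)
  | .or _ _, hν, _, hv =>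
      or_congr (nodeSem_mapN_iff hG hwf hν.1 hv) (nodeSem_mapN_iff hG hwf hν.2 hv)
  | .ex _, hν, _, hv => exists_congr fun _ => pathSem_mapP_iff hG hwf hν hv
  | .exEq _ _, hν, _, hv | .exNe _ _, hν, _, hv => by
      simp only [mapN, nodeSem, hG.D_eq, pathSem_mapP_iff hG hwf hν.1 hv,
        pathSem_mapP_iff hG hwf hν.2 hv]
end

end

/-- `p₀ = n`, `loop = Sum.inr true` and `ε = Sum.inr false`; the ε-cycle is
`n → 0 → 1 → … → n−1 → n`, and the original labels are embedded via `Sum.inl`. -/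
theorem stmt_18 {σe σn : Type} (n : ℕ) (hn : 0 < n)
    (G : DataGraph σe σn) (hV : G.V = {k | k < n})
    (hwf : ∀ e ∈ G.E, e.1 ∈ G.V ∧ e.2.2 ∈ G.V)
    (a : σe) (ls : List σe) (hcov : ∀ x : σe, x ∈ a :: ls)
    (ν : NodeExpr σe σn)
    (G' : DataGraph (σe ⊕ Bool) σn)
    (hG'V : G'.V = {k | k < n + 1})
    (hG'E : G'.E = {e | ∃ x y : ℕ, ∃ b : σe, (x, b, y) ∈ G.E ∧ e = (x, Sum.inl b, y)} ∪
        ({(n, Sum.inr false, 0), ((n - 1 : ℕ), Sum.inr false, n), (n, Sum.inr true, n)} ∪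
          {e | ∃ i : ℕ, i + 1 < n ∧ e = (i, Sum.inr false, i + 1)}))
    (hG'D : G'.D = G.D) :
    (∀ v ∈ G.V, nodeSem G ν v) ↔
      nodeSem G'
        (.ex (.concat
          (.star (.concat (.label (Sum.inr false))
            (.test (mapN Sum.inl (elimAnyN a ls ν)))))
          (.concat (.label (Sum.inr false)) (.label (Sum.inr true))))) n := by
  have hext : G.IsExtension Sum.inl G' :=
    { V_subset := by simp only [hV, hG'V, Set.ofPred_subset_ofPred]; omega
      D_eq := hG'D
      mem_E_iff := fun x b y => by rw [hG'E]; simp }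
  have hε : ∀ x y, (x, Sum.inr false, y) ∈ G'.E ↔
      (x = n ∧ y = 0) ∨ (x = n - 1 ∧ y = n) ∨ (x + 1 < n ∧ y = x + 1) := by
    intro x y
    rw [hG'E]
    simp only [Set.mem_union, Set.mem_ofPred_eq, Set.mem_insert_iff, Set.mem_singleton_iff,
      Prod.mk.injEq, Sum.inr.injEq, reduceCtorEq, Bool.false_eq_true, false_and, and_false,
      exists_false, true_and, or_false, false_or, ↓existsAndEq]
    omega
  have hloop : ∀ x y, (x, Sum.inr true, y) ∈ G'.E ↔ x = n ∧ y = n := by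
    intro x y; rw [hG'E]; simp
  set μ' := mapN Sum.inl (elimAnyN a ls ν)
  have hμ' : ∀ v < n, nodeSem G' μ' v ↔ nodeSem G ν v := fun v hv => by
    rw [nodeSem_mapN_iff hext hwf (elimAnyN_wildcardFree a ls ν) (hV ▸ hv), nodeSem_elimAnyN hcov]
  have hcycle := reflTransGen_cycle_iff (P := nodeSem G' μ')
    (r := pathSem G' (.concat (.label (Sum.inr false)) (.test μ')))
    (fun x y => by rw [pathSem_concat_label_test, hε]) (j := n - 1)
  have hV' : ∀ k ≤ n, k ∈ G'.V := fun k hk => by simp only [hG'V, Set.mem_ofPred_eq]; omega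
  rw [nodeSem_ex_star_return_iff (hV' n le_rfl) (hV' (n - 1) (Nat.sub_le n 1)) hloop
    (fun x => by rw [hε]; omega), hcycle, or_iff_right (by omega), and_iff_right (by omega)]
  simp only [hV, Set.mem_ofPred_eq, ← Nat.lt_iff_le_pred hn]
  exact forall₂_congr fun v hv => (hμ' v hv).symm
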